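/- arXiv:2302.11601 — 2 statements merged into one kernel-verified Lean document; each statement's English description precedes it below -/
import Mathlib

section
/- Let r > 0, let θ : ℝ → ℝ be Lipschitz continuous with Lipschitz constant 1/r, let P_θ = θ(0) ∈ [π/2, π], let P_y, G_y ∈ ℝ, and set o_y = P_y − r·cos(P_θ). If P_y ≤ G_y < o_y, then for every s_f ≥ 0 with P_y + ∫₀^{s_f} sin(θ(t)) dt ≥ G_y, one has s_f ≥ r·(P_θ − π + arccos((o_y − G_y)/r)). -/
/-!
Along the path the heading can drift from `θ 0` by at most `t / r`. While the turn stays inside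
`[π/2, 3π/2]`, where `sin` is decreasing, the vertical speed is therefore at most that of the
clockwise arc of radius `r`, `sin (θ 0 - t / r)`, whose climb over arc length `s` is
`r * (cos (θ 0 - s / r) - cos (θ 0))`. If `s` were below the bound, this climb would stay strictly
under `G_y - P_y`.
-/

open Real

theorem Real.sin_le_sin_of_pi_div_two_le {x y : ℝ} (hx : π / 2 ≤ x) (hxy : x ≤ y)
    (hy : y ≤ 3 * π / 2) : sin y ≤ sin x := by
  rw [← cos_sub_pi_div_two, ← cos_sub_pi_div_two]
  exact cos_le_cos_of_nonneg_of_le_pi (by linarith) (by linarith) (by linarith)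

theorem integral_sin_sub_div (φ : ℝ) {r : ℝ} (hr : r ≠ 0) (s : ℝ) :
    ∫ t in (0 : ℝ)..s, sin (φ - t / r) = r * (cos (φ - s / r) - cos φ) := by
  simp [intervalIntegral.integral_comp_sub_div _ hr, integral_sin]

section LipschitzHeading

variable {r : ℝ} {θ : ℝ → ℝ}

theorem LipschitzWith.abs_sub_le_div (hr : 0 ≤ r) (hθ : LipschitzWith (1 / r).toNNReal θ)
    (s t : ℝ) : |θ t - θ s| ≤ |t - s| / r := by
  have h := hθ.dist_le_mul t s
  rwa [Real.dist_eq, Real.dist_eq, Real.coe_toNNReal _ (by positivity), one_div_mul_eq_div] at h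

theorem sin_le_sin_sub_div_of_lipschitzWith (hr : 0 ≤ r)
    (hθ : LipschitzWith (1 / r).toNNReal θ) {t : ℝ} (ht : 0 ≤ t)
    (hlow : π / 2 ≤ θ 0 - t / r) (hhigh : θ 0 + t / r ≤ 3 * π / 2) :
    sin (θ t) ≤ sin (θ 0 - t / r) := by
  have h := hθ.abs_sub_le_div hr 0 t
  rw [sub_zero, abs_of_nonneg ht] at h
  obtain ⟨h₁, h₂⟩ := abs_le.mp h
  exact sin_le_sin_of_pi_div_two_le hlow (by linarith) (by linarith)

theorem integral_sin_le_of_lipschitzWith (hr : 0 < r)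
    (hθ : LipschitzWith (1 / r).toNNReal θ) {s : ℝ} (hs : 0 ≤ s)
    (hlow : π / 2 ≤ θ 0 - s / r) (hhigh : θ 0 + s / r ≤ 3 * π / 2) :
    ∫ t in (0 : ℝ)..s, sin (θ t) ≤ r * (cos (θ 0 - s / r) - cos (θ 0)) := by
  rw [← integral_sin_sub_div _ hr.ne']
  refine intervalIntegral.integral_mono_on hs ?_ ?_ fun t ht => ?_
  · exact (continuous_sin.comp hθ.continuous).intervalIntegrable _ _
  · exact (continuous_sin.comp (by fun_prop)).intervalIntegrable _ _
  · have hts : t / r ≤ s / r := div_le_div_of_nonneg_right ht.2 hr.le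
    exact sin_le_sin_sub_div_of_lipschitzWith hr.le hθ ht.1 (by linarith) (by linarith)

end LipschitzHeading

theorem stmt_3_general (r : ℝ) (hr : 0 < r) (θ : ℝ → ℝ)
    (hθ : LipschitzWith (Real.toNNReal (1 / r)) θ)
    (hPθ : θ 0 ∈ Set.Icc (Real.pi / 2) Real.pi)
    (P_y G_y : ℝ)
    (hG2 : G_y < P_y - r * Real.cos (θ 0)) :
    ∀ s_f : ℝ, 0 ≤ s_f →
      P_y + ∫ t in (0:ℝ)..s_f, Real.sin (θ t) ≥ G_y →
      s_f ≥ r * (θ 0 - Real.pi +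
        Real.arccos (((P_y - r * Real.cos (θ 0)) - G_y) / r)) := by
  intro s hs hy
  obtain ⟨-, hπ⟩ := hPθ
  set c := ((P_y - r * cos (θ 0)) - G_y) / r
  have hc : 0 < c := div_pos (by linarith) hr
  have hrc : r * c = P_y - r * cos (θ 0) - G_y := mul_div_cancel₀ _ hr.ne'
  by_contra! hs_lt
  have hsr : s / r < θ 0 - π + arccos c := (div_lt_iff₀' hr).2 hs_lt
  have hsr₀ : 0 ≤ s / r := div_nonneg hs hr.le
  have harc_le : arccos c ≤ π / 2 := arccos_le_pi_div_two.2 hc.le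
  -- `0 ≤ s` makes the negated bound positive, so `arccos c > 0`, i.e. `c < 1`.
  have hc₁ : c < 1 := arccos_pos.1 (by linarith)
  have hclimb := integral_sin_le_of_lipschitzWith hr hθ hs (by linarith) (by linarith)
  have hcos : cos (θ 0 - s / r) < -c :=
    calc cos (θ 0 - s / r) < cos (π - arccos c) :=
          cos_lt_cos_of_nonneg_of_le_pi (by linarith [arccos_le_pi c]) (by linarith) (by linarith)
      _ = -c := by rw [cos_pi_sub, cos_arccos (by linarith) hc₁.le]
  linarith [mul_lt_mul_of_pos_left hcos hr]

theorem stmt_3 (r : ℝ) (hr : 0 < r) (θ : ℝ → ℝ)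
    (hθ : LipschitzWith (Real.toNNReal (1 / r)) θ)
    (hPθ : θ 0 ∈ Set.Icc (Real.pi / 2) Real.pi)
    (P_y G_y : ℝ)
    (hG1 : P_y ≤ G_y) (hG2 : G_y < P_y - r * Real.cos (θ 0)) :
    ∀ s_f : ℝ, 0 ≤ s_f →
      P_y + ∫ t in (0:ℝ)..s_f, Real.sin (θ t) ≥ G_y →
      s_f ≥ r * (θ 0 - Real.pi +
        Real.arccos (((P_y - r * Real.cos (θ 0)) - G_y) / r)) :=
  stmt_3_general r hr θ hθ hPθ P_y G_y hG2
end

section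
/- Let r > 0, let S = {π/2 + 2πk : k ∈ ℤ}, and let θ : ℝ → ℝ be Lipschitz continuous with Lipschitz constant 1/r. Let δ = infDist(θ(0), S). Then for every s ≥ 0, sin(θ(s)) ≤ cos(max(0, δ − s/r)). -/
/-
Rounding gives a heading `y ∈ upSet` with `|x - y| ≤ π`, and `sin x = cos (x - y)`; since `cos` is
antitone on `[0, π]` and `infDist x upSet ≤ |x - y|`, this yields `sin x ≤ cos (infDist x upSet)`.
Lipschitz continuity moves `θ` by at most `s / r`, so `infDist (θ s) upSet ≥ max 0 (δ - s / r)`,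
and antitonicity of `cos` again gives the bound.
-/

open Real

/-- The set of "straight up" headings `π/2 + 2πk`, `k ∈ ℤ`. -/
def upSet : Set ℝ := {x : ℝ | ∃ k : ℤ, x = Real.pi / 2 + 2 * Real.pi * k}

lemma exists_mem_upSet_abs_sub_le_pi (x : ℝ) : ∃ y ∈ upSet, |x - y| ≤ π := by
  set k : ℤ := round ((x - π / 2) / (2 * π))
  refine ⟨π / 2 + 2 * π * k, ⟨k, rfl⟩, ?_⟩
  have hk : |(x - π / 2) / (2 * π) - k| ≤ 1 / 2 := abs_sub_round _
  have hx : x - (π / 2 + 2 * π * k) = ((x - π / 2) / (2 * π) - k) * (2 * π) := by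
    field_simp
    ring
  rw [hx, abs_mul, abs_of_pos two_pi_pos]
  nlinarith [pi_pos]

lemma sin_eq_cos_sub_of_mem_upSet {x y : ℝ} (hy : y ∈ upSet) : sin x = cos (x - y) := by
  obtain ⟨k, rfl⟩ := hy
  rw [show x - (π / 2 + 2 * π * k) = (x - π / 2) - k * (2 * π) by ring,
    cos_sub_int_mul_two_pi, cos_sub_pi_div_two]

lemma infDist_upSet_le_pi (x : ℝ) : Metric.infDist x upSet ≤ π := by
  obtain ⟨y, hy, hxy⟩ := exists_mem_upSet_abs_sub_le_pi x
  exact (Metric.infDist_le_dist_of_mem hy).trans hxy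

lemma sin_le_cos_infDist_upSet (x : ℝ) : sin x ≤ cos (Metric.infDist x upSet) := by
  obtain ⟨y, hy, hxy⟩ := exists_mem_upSet_abs_sub_le_pi x
  rw [sin_eq_cos_sub_of_mem_upSet hy, ← cos_abs]
  exact cos_le_cos_of_nonneg_of_le_pi Metric.infDist_nonneg hxy
    (Metric.infDist_le_dist_of_mem hy)

lemma LipschitzWith.dist_le_div {α : Type*} [PseudoMetricSpace α] {r : ℝ} (hr : 0 < r)
    {f : α → ℝ} (hf : LipschitzWith (1 / r).toNNReal f) (a b : α) :
    dist (f a) (f b) ≤ dist a b / r := by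
  have h := hf.dist_le_mul a b
  rwa [coe_toNNReal _ (by positivity), one_div_mul_eq_div] at h

theorem stmt_8 (r : ℝ) (hr : 0 < r) (θ : ℝ → ℝ)
    (hθ : LipschitzWith (Real.toNNReal (1 / r)) θ) :
    ∀ s : ℝ, 0 ≤ s →
      Real.sin (θ s) ≤ Real.cos (max 0 (Metric.infDist (θ 0) upSet - s / r)) := by
  intro s hs
  have hmove : dist (θ 0) (θ s) ≤ s / r := by
    simpa [Real.dist_eq, abs_of_nonneg hs] using hθ.dist_le_div hr 0 s
  have hinfDist : max 0 (Metric.infDist (θ 0) upSet - s / r) ≤ Metric.infDist (θ s) upSet :=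
    max_le Metric.infDist_nonneg <| by
      linarith [Metric.infDist_le_infDist_add_dist (x := θ 0) (y := θ s) (s := upSet)]
  calc sin (θ s) ≤ cos (Metric.infDist (θ s) upSet) := sin_le_cos_infDist_upSet _
    _ ≤ cos (max 0 (Metric.infDist (θ 0) upSet - s / r)) :=
      cos_le_cos_of_nonneg_of_le_pi (le_max_left _ _) (infDist_upSet_le_pi _) hinfDist
end
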